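/- Let κ be a regular uncountable cardinal. Then the full κ-bounded powerset monad P_κ is tensorable: for every monad T on the category Type u of sets, the forgetful functor from the category TAlg(P_κ, T) of (P_κ, T)-tensor algebras to Type u has a left adjoint (i.e., the tensor P_κ ⊗ T exists). -/

import Mathlib

open CategoryTheory

universe u

/-- Underlying object map of the full `κ`-bounded powerset monad. -/
def PfullObj (κ : Cardinal.{u}) (X : Type u) : Type u :=
  {s : Set X // Cardinal.mk s < κ}

namespace PfullObj

variable {κ : Cardinal.{u}}

/-- Direct image. -/
def fmap {X Y : Type u} (f : X → Y) (s : PfullObj κ X) : PfullObj κ Y :=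
  ⟨f '' s.1, Cardinal.mk_image_le.trans_lt s.2⟩

@[simp] theorem fmap_coe {X Y : Type u} (f : X → Y) (s : PfullObj κ X) :
    (fmap f s).1 = f '' s.1 := rfl

/-- Unit: singletons. -/
def eta (hκ : κ.IsRegular) {X : Type u} (x : X) : PfullObj κ X :=
  ⟨{x}, by
    rw [Cardinal.mk_singleton]
    exact lt_of_lt_of_le Cardinal.one_lt_aleph0 hκ.aleph0_le⟩

@[simp] theorem eta_coe (hκ : κ.IsRegular) {X : Type u} (x : X) :
    (eta hκ x : PfullObj κ X).1 = {x} := rfl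

/-- Multiplication: union. -/
def mu (hκ : κ.IsRegular) {X : Type u} (S : PfullObj κ (PfullObj κ X)) : PfullObj κ X :=
  ⟨⋃ t ∈ S.1, t.1,
    (Cardinal.card_biUnion_lt_iff_forall_of_isRegular hκ S.2).mpr fun t _ => t.2⟩

@[simp] theorem mu_coe (hκ : κ.IsRegular) {X : Type u} (S : PfullObj κ (PfullObj κ X)) :
    (mu hκ S).1 = ⋃ t ∈ S.1, t.1 := rfl

end PfullObj

/-- The full `κ`-bounded powerset monad `P_κ`: it sends a set `X` to the set of all
subsets of `X` of cardinality `< κ`, acts by direct image, has unit `x ↦ {x}` and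
multiplication given by union. -/
def Pfull (κ : Cardinal.{u}) (hκ : κ.IsRegular) : Monad (Type u) where
  obj X := PfullObj κ X
  map f := TypeCat.ofHom (PfullObj.fmap f)
  map_id X := by
    refine ConcreteCategory.hom_ext _ _ fun s => ?_
    apply Subtype.ext
    simp [PfullObj.fmap]
  map_comp {X Y Z} f g := by
    refine ConcreteCategory.hom_ext _ _ fun s => ?_
    apply Subtype.ext
    show ((f ≫ g) '' s.1 : Set Z) = g '' (f '' s.1)
    simp [Set.image_image]
  η :=
    { app := fun X => TypeCat.ofHom (fun x => PfullObj.eta hκ x)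
      naturality := fun X Y f => by
        refine ConcreteCategory.hom_ext _ _ fun x => ?_
        apply Subtype.ext
        show ({f x} : Set Y) = f '' {x}
        simp }
  μ :=
    { app := fun X => TypeCat.ofHom (fun S => PfullObj.mu hκ S)
      naturality := fun X Y f => by
        refine ConcreteCategory.hom_ext _ _ fun S => ?_
        apply Subtype.ext
        show (⋃ t ∈ (PfullObj.fmap (PfullObj.fmap f) S).1, t.1 : Set Y)
          = f '' (⋃ t ∈ S.1, t.1)
        ext y
        simp only [PfullObj.fmap_coe, Set.mem_iUnion, Set.mem_image]
        constructor
        · rintro ⟨t, ⟨⟨u, hu, rfl⟩, hy⟩⟩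
          simp only [PfullObj.fmap_coe, Set.mem_image] at hy
          obtain ⟨x, hx, rfl⟩ := hy
          exact ⟨x, ⟨u, hu, hx⟩, rfl⟩
        · rintro ⟨x, ⟨⟨u, hu, hx⟩, rfl⟩⟩
          exact ⟨PfullObj.fmap f u, ⟨⟨u, hu, rfl⟩, by
            simp only [PfullObj.fmap_coe]
            exact ⟨x, hx, rfl⟩⟩⟩ }
  left_unit X := by
    refine ConcreteCategory.hom_ext _ _ fun S => ?_
    apply Subtype.ext
    show (⋃ t ∈ (PfullObj.eta hκ S).1, t.1 : Set X) = S.1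
    simp
  right_unit X := by
    refine ConcreteCategory.hom_ext _ _ fun S => ?_
    apply Subtype.ext
    show (⋃ t ∈ (PfullObj.fmap (PfullObj.eta hκ) S).1, t.1 : Set X) = S.1
    ext y
    simp
  assoc X := by
    refine ConcreteCategory.hom_ext _ _ fun SS => ?_
    apply Subtype.ext
    show (⋃ t ∈ (PfullObj.fmap (PfullObj.mu hκ) SS).1, t.1 : Set X)
      = ⋃ t ∈ (PfullObj.mu hκ SS).1, t.1
    ext y
    simp only [PfullObj.fmap_coe, PfullObj.mu_coe, Set.mem_iUnion, Set.mem_image]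
    constructor
    · rintro ⟨t, ⟨⟨U, hU, rfl⟩, hy⟩⟩
      simp only [PfullObj.mu_coe, Set.mem_iUnion] at hy
      obtain ⟨u, hu, hy⟩ := hy
      exact ⟨u, ⟨⟨U, hU, hu⟩, hy⟩⟩
    · rintro ⟨u, ⟨⟨U, hU, hu⟩, hy⟩⟩
      exact ⟨PfullObj.mu hκ U, ⟨⟨U, hU, rfl⟩, by
        simp only [PfullObj.mu_coe, Set.mem_iUnion]
        exact ⟨u, hu, hy⟩⟩⟩

/-- A `(T,S)`-tensor algebra: a set with Eilenberg–Moore algebra structures for both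
monads, satisfying the tensor law. -/
structure TensorAlg (T S : Monad (Type u)) where
  carrier : Type u
  α : T.obj carrier → carrier
  β : S.obj carrier → carrier
  α_unit : ∀ x : carrier, α (T.η.app carrier x) = x
  α_mul : ∀ m : T.obj (T.obj carrier), α (T.μ.app carrier m) = α (T.map (TypeCat.ofHom α) m)
  β_unit : ∀ x : carrier, β (S.η.app carrier x) = x
  β_mul : ∀ m : S.obj (S.obj carrier), β (S.μ.app carrier m) = β (S.map (TypeCat.ofHom β) m)
  tensor_law : ∀ {Y Z : Type u} (p : T.obj Y) (q : S.obj Z) (f : Y × Z → carrier),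
    α (T.map (TypeCat.ofHom (fun y => β (S.map (TypeCat.ofHom (fun z => f (y, z))) q))) p) =
      β (S.map (TypeCat.ofHom (fun z => α (T.map (TypeCat.ofHom (fun y => f (y, z))) p))) q)

/-- Morphisms of tensor algebras: maps homomorphic for both structures. -/
@[ext]
structure TensorAlgHom {T S : Monad (Type u)} (A B : TensorAlg T S) where
  toFun : A.carrier → B.carrier
  map_α : ∀ m : T.obj A.carrier, toFun (A.α m) = B.α (T.map (TypeCat.ofHom toFun) m)
  map_β : ∀ m : S.obj A.carrier, toFun (A.β m) = B.β (S.map (TypeCat.ofHom toFun) m)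

instance TensorAlg.instCategory {T S : Monad (Type u)} : Category (TensorAlg T S) where
  Hom A B := TensorAlgHom A B
  id A :=
    { toFun := id
      map_α := fun m => by
        show A.α m = A.α (T.map (𝟙 A.carrier) m)
        rw [FunctorToTypes.map_id_apply]
      map_β := fun m => by
        show A.β m = A.β (S.map (𝟙 A.carrier) m)
        rw [FunctorToTypes.map_id_apply] }
  comp {A B C} f g :=
    { toFun := g.toFun ∘ f.toFun
      map_α := fun m => by
        show g.toFun (f.toFun (A.α m)) = C.α (T.map (TypeCat.ofHom (g.toFun ∘ f.toFun)) m)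
        rw [f.map_α, g.map_α]
        congr 1
        exact (FunctorToTypes.map_comp_apply T.toFunctor (TypeCat.ofHom f.toFun) (TypeCat.ofHom g.toFun) m).symm
      map_β := fun m => by
        show g.toFun (f.toFun (A.β m)) = C.β (S.map (TypeCat.ofHom (g.toFun ∘ f.toFun)) m)
        rw [f.map_β, g.map_β]
        congr 1
        exact (FunctorToTypes.map_comp_apply S.toFunctor (TypeCat.ofHom f.toFun) (TypeCat.ofHom g.toFun) m).symm }
  id_comp f := by apply TensorAlgHom.ext; rfl
  comp_id f := by apply TensorAlgHom.ext; rfl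
  assoc f g h := by apply TensorAlgHom.ext; rfl

/-- The forgetful functor from `(T,S)`-tensor algebras to sets. -/
def forgetTAlg (T S : Monad (Type u)) : TensorAlg T S ⥤ Type u where
  obj A := A.carrier
  map f := TypeCat.ofHom (TensorAlgHom.toFun f)
  map_id _ := rfl
  map_comp _ _ := rfl

/-!
The forgetful functor has a left adjoint as soon as the subalgebra generated by an
`X`-indexed family always has cardinality at most that of a set `V X` depending only on `X`:
the free algebra on `X` is then the subalgebra generated by `X` inside the product of all
tensor algebras carried by subsets of `V X`.

For `P_κ ⊗ T` such a bound comes from an `ω`-step construction: starting from the generators,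
close alternately under small joins and under the `T`-operation, take the union `C` of the
stages, and let `D` be the set of small joins of elements of `C`. Joins of joins are joins, and
`D` is closed under the `T`-operation by the tensor law, because `κ > ℵ₀` makes every element of
`D` the join of its countably many slices along the stages.
-/

open Cardinal Set

namespace CategoryTheory.Monad

section MonadLemmas

variable (M : Monad (Type u))

theorem map_map {X Y Z : Type u} (f : X → Y) (g : Y → Z) (m : M.obj X) :
    M.map (↾g) (M.map (↾f) m) = M.map (↾(fun x => g (f x))) m :=
  (M.map_comp_apply (↾f) (↾g) m).symm

theorem η_naturality_apply {X Y : Type u} (f : X → Y) (x : X) :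
    M.η.app Y (f x) = M.map (↾f) (M.η.app X x) :=
  NatTrans.naturality_apply M.η (↾f) x

theorem μ_naturality_apply {X Y : Type u} (f : X → Y) (m : M.obj (M.obj X)) :
    M.μ.app Y (M.map (↾(M.map (↾f))) m) = M.map (↾f) (M.μ.app X m) :=
  NatTrans.naturality_apply M.μ (↾f) m

theorem map_injective_of_leftInverse {X Y : Type u} {f : X → Y} {g : Y → X}
    (h : Function.LeftInverse g f) : Function.Injective (M.map (↾f)) := by
  refine Function.LeftInverse.injective (g := M.map (↾g)) fun m => ?_
  rw [map_map, show (fun x => g (f x)) = _root_.id from funext h]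
  exact M.map_id_apply _ m

theorem mk_obj_le_mk_obj {X Y : Type u} [Nonempty X] (h : #X ≤ #Y) :
    #(M.obj X) ≤ #(M.obj Y) := by
  obtain ⟨f⟩ := h
  exact mk_le_of_injective
    (map_injective_of_leftInverse M (Function.leftInverse_invFun f.injective))

end MonadLemmas

section OpImage

variable (M : Monad (Type u)) {c : Type u} (op : M.obj c → c)

def opImage (B : Set c) : Set c :=
  range fun p : M.obj B => op (M.map (↾Subtype.val) p)

variable {M op}

theorem op_map_mem_opImage {Y : Type u} {B : Set c} (g : Y → c) (hg : ∀ y, g y ∈ B)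
    (p : M.obj Y) : op (M.map (↾g) p) ∈ opImage M op B :=
  ⟨M.map (↾(codRestrict g B hg)) p, by dsimp only; rw [map_map]; rfl⟩

theorem subset_opImage (hunit : ∀ x : c, op (M.η.app c x) = x) (B : Set c) :
    B ⊆ opImage M op B := fun b hb => by
  refine ⟨M.η.app B ⟨b, hb⟩, ?_⟩
  dsimp only
  rw [← η_naturality_apply, hunit]

theorem opImage_mono {B B' : Set c} (h : B ⊆ B') : opImage M op B ⊆ opImage M op B' := by
  rintro _ ⟨p, rfl⟩
  exact op_map_mem_opImage _ (fun b => h b.2) p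

theorem opImage_opImage_subset
    (hmul : ∀ m : M.obj (M.obj c), op (M.μ.app c m) = op (M.map (↾op) m)) (B : Set c) :
    opImage M op (opImage M op B) ⊆ opImage M op B := by
  rintro _ ⟨p, rfl⟩
  choose σ hσ using fun x : opImage M op B => x.2
  refine ⟨M.μ.app B (M.map (↾σ) p), ?_⟩
  dsimp only at hσ ⊢
  rw [← μ_naturality_apply, map_map, hmul, map_map]
  simp only [hσ]

theorem opImage_image_subset {d : Type u} {op' : M.obj d → d} {f : c → d}
    (hf : ∀ m, f (op m) = op' (M.map (↾f) m)) (E : Set c) :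
    opImage M op' (f '' E) ⊆ f '' opImage M op E := by
  rintro _ ⟨p, rfl⟩
  choose k hkE hk using fun y : f '' E => y.2
  refine ⟨op (M.map (↾k) p), op_map_mem_opImage _ hkE p, ?_⟩
  rw [hf, map_map]
  simp only [hk]

theorem opImage_eqLocus_subset {d : Type u} {op' : M.obj d → d} {f g : c → d}
    (hf : ∀ m, f (op m) = op' (M.map (↾f) m)) (hg : ∀ m, g (op m) = op' (M.map (↾g) m)) :
    opImage M op {x | f x = g x} ⊆ {x | f x = g x} := by
  rintro _ ⟨p, rfl⟩
  have hfg : (fun x : {x | f x = g x} => f x.1) = fun x => g x.1 := funext fun x => x.2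
  show f (op _) = g (op _)
  rw [hf, hg, map_map, map_map, hfg]

theorem mk_opImage_le (B : Set c) : #(opImage M op B) ≤ #(M.obj B) :=
  mk_range_le

end OpImage

end CategoryTheory.Monad

namespace TensorAlg

open Monad

variable {M N : Monad (Type u)}

def IsSubalg (A : TensorAlg M N) (B : Set A.carrier) : Prop :=
  opImage M A.α B ⊆ B ∧ opImage N A.β B ⊆ B

theorem isSubalg_sInter {A : TensorAlg M N} {𝒞 : Set (Set A.carrier)}
    (h : ∀ B ∈ 𝒞, A.IsSubalg B) : A.IsSubalg (⋂₀ 𝒞) :=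
  ⟨subset_sInter fun B hB => (opImage_mono (sInter_subset_of_mem hB)).trans (h B hB).1,
    subset_sInter fun B hB => (opImage_mono (sInter_subset_of_mem hB)).trans (h B hB).2⟩

def subalg (A : TensorAlg M N) (B : Set A.carrier) (h : A.IsSubalg B) : TensorAlg M N where
  carrier := B
  α p := ⟨A.α (M.map (↾Subtype.val) p), h.1 ⟨p, rfl⟩⟩
  β q := ⟨A.β (N.map (↾Subtype.val) q), h.2 ⟨q, rfl⟩⟩
  α_unit x := Subtype.ext <| by
    dsimp only; rw [← η_naturality_apply, A.α_unit]
  α_mul m := Subtype.ext <| by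
    dsimp only; rw [← μ_naturality_apply, A.α_mul, map_map, map_map]
  β_unit x := Subtype.ext <| by
    dsimp only; rw [← η_naturality_apply, A.β_unit]
  β_mul m := Subtype.ext <| by
    dsimp only; rw [← μ_naturality_apply, A.β_mul, map_map, map_map]
  tensor_law p q f := Subtype.ext <| by
    dsimp only
    simp only [map_map]
    exact A.tensor_law p q fun yz => (f yz).val

def pi {ι : Type u} (F : ι → TensorAlg M N) : TensorAlg M N where
  carrier := ∀ i, (F i).carrier
  α m i := (F i).α (M.map (↾(fun g => g i)) m)
  β m i := (F i).β (N.map (↾(fun g => g i)) m)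
  α_unit x := funext fun i => by
    dsimp only; rw [← η_naturality_apply, (F i).α_unit]
  α_mul m := funext fun i => by
    dsimp only; rw [← μ_naturality_apply, (F i).α_mul, map_map, map_map]
  β_unit x := funext fun i => by
    dsimp only; rw [← η_naturality_apply, (F i).β_unit]
  β_mul m := funext fun i => by
    dsimp only; rw [← μ_naturality_apply, (F i).β_mul, map_map, map_map]
  tensor_law p q f := funext fun i => by
    dsimp only
    simp only [map_map]
    exact (F i).tensor_law p q fun yz => f yz i

def transport (A : TensorAlg M N) {c : Type u} (e : A.carrier ≃ c) : TensorAlg M N where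
  carrier := c
  α p := e (A.α (M.map (↾e.symm) p))
  β q := e (A.β (N.map (↾e.symm) q))
  α_unit x := by
    dsimp only; rw [← η_naturality_apply, A.α_unit, Equiv.apply_symm_apply]
  α_mul m := congrArg e <| by
    rw [← μ_naturality_apply, A.α_mul, map_map, map_map]
    simp only [Equiv.symm_apply_apply]
  β_unit x := by
    dsimp only; rw [← η_naturality_apply, A.β_unit, Equiv.apply_symm_apply]
  β_mul m := congrArg e <| by
    rw [← μ_naturality_apply, A.β_mul, map_map, map_map]
    simp only [Equiv.symm_apply_apply]
  tensor_law p q f := congrArg e <| by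
    simp only [map_map, Equiv.symm_apply_apply]
    exact A.tensor_law p q fun yz => e.symm (f yz)

/-- Unlike `TensorAlg`, the structures on a fixed carrier form a `Type u`, so they can index a
product. -/
structure Str (M N : Monad (Type u)) (c : Type u) where
  α : M.obj c → c
  β : N.obj c → c
  α_unit : ∀ x : c, α (M.η.app c x) = x
  α_mul : ∀ m : M.obj (M.obj c), α (M.μ.app c m) = α (M.map (↾α) m)
  β_unit : ∀ x : c, β (N.η.app c x) = x
  β_mul : ∀ m : N.obj (N.obj c), β (N.μ.app c m) = β (N.map (↾β) m)
  tensor_law : ∀ {Y Z : Type u} (p : M.obj Y) (q : N.obj Z) (f : Y × Z → c),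
    α (M.map (↾(fun y => β (N.map (↾(fun z => f (y, z))) q))) p) =
      β (N.map (↾(fun z => α (M.map (↾(fun y => f (y, z))) p))) q)

def Str.toAlg {c : Type u} (d : Str M N c) : TensorAlg M N :=
  ⟨c, d.α, d.β, d.α_unit, d.α_mul, d.β_unit, d.β_mul, d.tensor_law⟩

def str (A : TensorAlg M N) : Str M N A.carrier :=
  ⟨A.α, A.β, A.α_unit, A.α_mul, A.β_unit, A.β_mul, A.tensor_law⟩

def subalgVal (A : TensorAlg M N) (B : Set A.carrier) (h : A.IsSubalg B) :
    A.subalg B h ⟶ A where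
  toFun := Subtype.val
  map_α _ := rfl
  map_β _ := rfl

def piEval {ι : Type u} (F : ι → TensorAlg M N) (i : ι) : pi F ⟶ F i where
  toFun g := g i
  map_α _ := rfl
  map_β _ := rfl

def transportSymm (A : TensorAlg M N) {c : Type u} (e : A.carrier ≃ c) : A.transport e ⟶ A where
  toFun := e.symm
  map_α _ := e.symm_apply_apply _
  map_β _ := e.symm_apply_apply _

theorem IsSubalg.image {A B : TensorAlg M N} {E : Set A.carrier} (h : A.IsSubalg E)
    (φ : A ⟶ B) : B.IsSubalg (φ.toFun '' E) :=
  ⟨(opImage_image_subset φ.map_α E).trans (image_mono h.1),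
    (opImage_image_subset φ.map_β E).trans (image_mono h.2)⟩

theorem isSubalg_eqLocus {A B : TensorAlg M N} (φ ψ : A ⟶ B) :
    A.IsSubalg {x | φ.toFun x = ψ.toFun x} :=
  ⟨opImage_eqLocus_subset φ.map_α ψ.map_α, opImage_eqLocus_subset φ.map_β ψ.map_β⟩

def closure (A : TensorAlg M N) (S : Set A.carrier) : Set A.carrier :=
  ⋂₀ {B | A.IsSubalg B ∧ S ⊆ B}

theorem isSubalg_closure (A : TensorAlg M N) (S : Set A.carrier) : A.IsSubalg (A.closure S) :=
  isSubalg_sInter fun _ hB => hB.1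

theorem subset_closure (A : TensorAlg M N) (S : Set A.carrier) : S ⊆ A.closure S :=
  subset_sInter fun _ hB => hB.2

theorem closure_subset {A : TensorAlg M N} {S B : Set A.carrier} (hB : A.IsSubalg B)
    (hS : S ⊆ B) : A.closure S ⊆ B :=
  sInter_subset_of_mem ⟨hB, hS⟩

def span (A : TensorAlg M N) (S : Set A.carrier) : TensorAlg M N :=
  A.subalg (A.closure S) (A.isSubalg_closure S)

def spanVal (A : TensorAlg M N) (S : Set A.carrier) : A.span S ⟶ A :=
  A.subalgVal _ (A.isSubalg_closure S)

theorem span_hom_ext {A B : TensorAlg M N} {S : Set A.carrier} {φ ψ : A.span S ⟶ B}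
    (h : ∀ s (hs : s ∈ S),
      φ.toFun ⟨s, A.subset_closure S hs⟩ = ψ.toFun ⟨s, A.subset_closure S hs⟩) :
    φ = ψ := by
  have hE := (isSubalg_eqLocus φ ψ).image (A.spanVal S)
  have hS : S ⊆ Subtype.val '' {x | φ.toFun x = ψ.toFun x} := fun s hs =>
    ⟨⟨s, A.subset_closure S hs⟩, h s hs, rfl⟩
  apply TensorAlgHom.ext
  funext x
  obtain ⟨y, hy, hyx⟩ := closure_subset hE hS x.2
  rwa [← Subtype.ext hyx]

section Free

open Limits

variable (M N : Monad (Type u)) (V : Type u → Type u)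

def FreeIndex (X : Type u) : Type u :=
  Σ c : Set (V X), Str M N c × (X → c)

def freeAmbient (X : Type u) : TensorAlg M N :=
  pi fun i : FreeIndex M N V X => i.2.1.toAlg

def freeAmbientUnit (X : Type u) : X → (freeAmbient M N V X).carrier :=
  fun x i => i.2.2 x

def free (X : Type u) : TensorAlg M N :=
  (freeAmbient M N V X).span (range (freeAmbientUnit M N V X))

def freeUnit (X : Type u) : X → (free M N V X).carrier :=
  fun x => ⟨freeAmbientUnit M N V X x, subset_closure _ _ ⟨x, rfl⟩⟩

variable {M N V}

theorem free_hom_ext {X : Type u} {B : TensorAlg M N} {φ ψ : free M N V X ⟶ B}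
    (h : ∀ x, φ.toFun (freeUnit M N V X x) = ψ.toFun (freeUnit M N V X x)) : φ = ψ :=
  span_hom_ext (by rintro _ ⟨x, rfl⟩; exact h x)

variable (hV : ∀ (X : Type u) (A : TensorAlg M N) (v : X → A.carrier),
  #(A.closure (range v)) ≤ #(V X))
include hV

theorem exists_free_lift {X : Type u} (B : TensorAlg M N) (v : X → B.carrier) :
    ∃ φ : free M N V X ⟶ B, ∀ x, φ.toFun (freeUnit M N V X x) = v x := by
  obtain ⟨emb⟩ := hV X B v
  let e : B.closure (range v) ≃ range emb := Equiv.ofInjective emb emb.injective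
  let i : FreeIndex M N V X :=
    ⟨range emb, ((B.span (range v)).transport e).str,
      fun x => e ⟨v x, B.subset_closure _ ⟨x, rfl⟩⟩⟩
  refine ⟨spanVal _ _ ≫ piEval _ i ≫ (B.span (range v)).transportSymm e ≫ spanVal _ _,
    fun x => ?_⟩
  exact congrArg Subtype.val (e.symm_apply_apply _)

theorem hasInitial_structuredArrow_forgetTAlg (X : Type u) :
    HasInitial (StructuredArrow X (forgetTAlg M N)) := by
  choose lift hlift using fun B : StructuredArrow X (forgetTAlg M N) =>
    exists_free_lift hV B.right B.hom
  refine IsInitial.hasInitial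
    (X := StructuredArrow.mk (Y := free M N V X) (↾(freeUnit M N V X))) (IsInitial.ofUniqueHom
      (fun B => StructuredArrow.homMk (lift B) (ConcreteCategory.hom_ext _ _ (hlift B)))
      fun B φ => StructuredArrow.hom_ext _ _ (free_hom_ext fun x => ?_))
  exact (ConcreteCategory.congr_hom (StructuredArrow.w φ) x).trans (hlift B x).symm

theorem exists_leftAdjoint_forgetTAlg :
    ∃ F : Type u ⥤ TensorAlg M N, Nonempty (F ⊣ forgetTAlg M N) :=
  have := hasInitial_structuredArrow_forgetTAlg hV
  ⟨_, ⟨adjunctionOfStructuredArrowInitials _⟩⟩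

end Free

end TensorAlg

namespace PfullObj

variable {κ : Cardinal.{u}} {X : Type u}

def inter (s : PfullObj κ X) (B : Set X) : PfullObj κ X :=
  ⟨s.1 ∩ B, (mk_le_mk_of_subset inter_subset_left).trans_lt s.2⟩

def univ (h : #X < κ) : PfullObj κ X :=
  ⟨Set.univ, by rwa [mk_univ]⟩

end PfullObj

namespace PfullTensor

open Monad

variable {κ : Cardinal.{u}} {hκ : κ.IsRegular}

section Joins

variable {c : Type u} {op : PfullObj κ c → c}

theorem mem_opImage_pfull_iff {B : Set c} {a : c} :
    a ∈ opImage (Pfull κ hκ) op B ↔ ∃ s : PfullObj κ c, s.1 ⊆ B ∧ op s = a := by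
  constructor
  · rintro ⟨p, rfl⟩
    exact ⟨PfullObj.fmap Subtype.val p, by rintro _ ⟨b, -, rfl⟩; exact b.2, rfl⟩
  · rintro ⟨s, hs, rfl⟩
    refine ⟨⟨Subtype.val ⁻¹' s.1,
      (mk_preimage_of_injective _ _ Subtype.val_injective).trans_lt s.2⟩,
      congrArg op (Subtype.ext ?_)⟩
    exact image_preimage_eq_of_subset (by rwa [Subtype.range_coe])

theorem opImage_pfull_nonempty (B : Set c) : (opImage (Pfull κ hκ) op B).Nonempty :=
  ⟨_, mem_opImage_pfull_iff.2 ⟨⟨∅, by simpa using hκ.pos⟩, empty_subset B, rfl⟩⟩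

theorem mk_opImage_pfull_le (B : Set c) : #(opImage (Pfull κ hκ) op B) ≤ 2 ^ #B :=
  (mk_opImage_le B).trans ((mk_subtype_le _).trans mk_set.le)

end Joins

variable {T : Monad (Type u)} (A : TensorAlg (Pfull κ hκ) T)

theorem α_map_α_inter_eq {I : Type u} (hI : #I < κ) (s : PfullObj κ A.carrier)
    {C : I → Set A.carrier} (hs : s.1 ⊆ ⋃ i, C i) :
    A.α ((Pfull κ hκ).map (↾(fun i => A.α (s.inter (C i)))) (PfullObj.univ hI)) = A.α s := by
  let slices : I → (Pfull κ hκ).obj A.carrier := fun i => s.inter (C i)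
  calc _ = A.α ((Pfull κ hκ).map (↾A.α) ((Pfull κ hκ).map (↾slices) (PfullObj.univ hI))) :=
        congrArg A.α (map_map _ slices A.α _).symm
    _ = A.α ((Pfull κ hκ).μ.app _ ((Pfull κ hκ).map (↾slices) (PfullObj.univ hI))) :=
        (A.α_mul _).symm
    _ = A.α s := congrArg A.α (Subtype.ext ?_)
  show ⋃ t ∈ (fun i => s.inter (C i)) '' Set.univ, t.1 = s.1
  simp only [image_univ, mem_range, iUnion_exists, iUnion_iUnion_eq']
  exact (iUnion_subset fun i => inter_subset_left).antisymm fun a ha =>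
    mem_iUnion.2 ((mem_iUnion.1 (hs ha)).imp fun i hi => ⟨ha, hi⟩)

variable {X : Type u}

def chain (u : X → A.carrier) : ℕ → Set A.carrier
  | 0 => range u
  | n + 1 => opImage T A.β (opImage (Pfull κ hκ) A.α (chain u n))

def chainUnion (u : X → A.carrier) : Set A.carrier :=
  ⋃ n : ULift.{u} ℕ, chain A u n.down

def chainJoins (u : X → A.carrier) : Set A.carrier :=
  opImage (Pfull κ hκ) A.α (chainUnion A u)

theorem range_subset_chainJoins (u : X → A.carrier) : range u ⊆ chainJoins A u :=
  (subset_iUnion (fun n : ULift.{u} ℕ => chain A u n.down) ⟨0⟩).trans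
    (subset_opImage A.α_unit _)

theorem isSubalg_chainJoins (hunc : ℵ₀ < κ) (u : X → A.carrier) :
    A.IsSubalg (chainJoins A u) := by
  refine ⟨opImage_opImage_subset A.α_mul _, ?_⟩
  rintro _ ⟨q, rfl⟩
  have hℕ : #(ULift.{u} ℕ) < κ := by rwa [mk_eq_aleph0]
  choose s hsub hs using fun z : chainJoins A u => mem_opImage_pfull_iff.1 z.2
  let sliceJoin : ULift.{u} ℕ × chainJoins A u → A.carrier :=
    fun nz => A.α ((s nz.2).inter (chain A u nz.1.down))
  have hrow :
      ∀ z, A.α ((Pfull κ hκ).map (↾(fun n => sliceJoin (n, z))) (PfullObj.univ hℕ)) = z := by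
    intro z
    rw [← hs z]
    exact α_map_α_inter_eq A hℕ (s z) (hsub z)
  have hcol :
      ∀ n : ULift.{u} ℕ, A.β (T.map (↾(fun z => sliceJoin (n, z))) q) ∈ chainUnion A u :=
    fun n => mem_iUnion.2 ⟨⟨n.down + 1⟩, op_map_mem_opImage _
      (fun z => mem_opImage_pfull_iff.2 ⟨_, inter_subset_right, rfl⟩) q⟩
  have key := A.tensor_law (PfullObj.univ hℕ) q sliceJoin
  simp only [hrow] at key
  show A.β (T.map (↾Subtype.val) q) ∈ _
  rw [← key]
  exact op_map_mem_opImage _ hcol _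

def sizeChain (T : Monad (Type u)) (X : Type u) : ℕ → Type u
  | 0 => X
  | n + 1 => T.obj (Set (sizeChain T X n))

def sizeBound (T : Monad (Type u)) (X : Type u) : Type u :=
  Set (Σ n : ULift.{u} ℕ, sizeChain T X n.down)

theorem mk_chain_le (u : X → A.carrier) (n : ℕ) : #(chain A u n) ≤ #(sizeChain T X n) := by
  induction n with
  | zero => exact mk_range_le
  | succ n ih =>
    have hjoins : #(opImage (Pfull κ hκ) A.α (chain A u n)) ≤ #(Set (sizeChain T X n)) :=
      (mk_opImage_pfull_le _).trans (mk_set.symm ▸ power_le_power_left two_ne_zero ih)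
    have := (opImage_pfull_nonempty (hκ := hκ) (op := A.α) (chain A u n)).to_subtype
    exact (mk_opImage_le _).trans (mk_obj_le_mk_obj T hjoins)

theorem mk_chainJoins_le (u : X → A.carrier) : #(chainJoins A u) ≤ #(sizeBound T X) := by
  have hunion : #(chainUnion A u) ≤ #(Σ n : ULift.{u} ℕ, sizeChain T X n.down) :=
    mk_iUnion_le_sum_mk.trans
      ((sum_le_sum _ _ fun n : ULift.{u} ℕ => mk_chain_le A u n.down).trans_eq (mk_sigma _).symm)
  exact (mk_opImage_pfull_le _).trans (mk_set.symm ▸ power_le_power_left two_ne_zero hunion)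

theorem mk_closure_range_le (hunc : ℵ₀ < κ) (u : X → A.carrier) :
    #(A.closure (range u)) ≤ #(sizeBound T X) :=
  (mk_le_mk_of_subset (TensorAlg.closure_subset (isSubalg_chainJoins A hunc u)
    (range_subset_chainJoins A u))).trans (mk_chainJoins_le A u)

end PfullTensor

/-- Theorem 4.4 (for `P_κ`): for every regular uncountable cardinal `κ`, the full
`κ`-bounded powerset monad is tensorable: for every monad `T` the forgetful functor
from `(P_κ, T)`-tensor algebras to sets has a left adjoint. -/
theorem pfull_tensorable {κ : Cardinal.{u}} (hκ : κ.IsRegular)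
    (hunc : Cardinal.aleph0 < κ) (T : Monad (Type u)) :
    ∃ F : Type u ⥤ TensorAlg (Pfull κ hκ) T, Nonempty (F ⊣ forgetTAlg (Pfull κ hκ) T) :=
  TensorAlg.exists_leftAdjoint_forgetTAlg (V := PfullTensor.sizeBound T)
    fun _ A u => PfullTensor.mk_closure_range_le A hunc u
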